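/- Let ξ ∈ Φ and suppose Λ ⊆ h_ξ(Π_ξ) satisfies f_{g(ξ)}(Λ) = Λ. Set S = h_ξ⁻¹(Λ) (the preimage of Λ under the invertible affine map h_ξ) and Λ̃ = S ∪ f_ξ(S). Then f_ξ(Λ̃) = Λ̃, i.e. Λ̃ is an invariant set of f_ξ. -/

import Mathlib

noncomputable section

/-- Parameters ξ = (τL, δL, τR, δR) of the 2D border-collision normal form. -/
structure Param where
  tL : ℝ
  dL : ℝ
  tR : ℝ
  dR : ℝ

/-- The region Φ where the BCNF has two saddle fixed points. -/
def Phi (ξ : Param) : Prop := |ξ.dL + 1| < ξ.tL ∧ ξ.tR < -|ξ.dR + 1|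

/-- The 2D border-collision normal form map. -/
def fBC (ξ : Param) (p : ℝ × ℝ) : ℝ × ℝ :=
  if p.1 ≤ 0 then (ξ.tL * p.1 + p.2 + 1, -ξ.dL * p.1)
  else (ξ.tR * p.1 + p.2 + 1, -ξ.dR * p.1)

def lamLu (ξ : Param) : ℝ := (ξ.tL + Real.sqrt (ξ.tL^2 - 4*ξ.dL)) / 2
def lamLs (ξ : Param) : ℝ := (ξ.tL - Real.sqrt (ξ.tL^2 - 4*ξ.dL)) / 2
def lamRu (ξ : Param) : ℝ := (ξ.tR - Real.sqrt (ξ.tR^2 - 4*ξ.dR)) / 2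
def lamRs (ξ : Param) : ℝ := (ξ.tR + Real.sqrt (ξ.tR^2 - 4*ξ.dR)) / 2

/-- The renormalisation operator g. -/
def gmap (ξ : Param) : Param :=
  ⟨ξ.tR^2 - 2*ξ.dR, ξ.dR^2, ξ.tL*ξ.tR - ξ.dL - ξ.dR, ξ.dL*ξ.dR⟩

def alphaF (ξ : Param) : ℝ := ξ.tL*ξ.tR + (ξ.dL - 1)*(ξ.dR - 1)

def phiPlus (ξ : Param) : ℝ :=
  ξ.dR - (ξ.tR + ξ.dL + ξ.dR - (1 + ξ.tR) * lamLu ξ) * lamLu ξ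

def phiMinus (ξ : Param) : ℝ :=
  ξ.dR - (ξ.dR + ξ.tR - (1 + lamRu ξ) * lamLu ξ) * lamLu ξ

def phiMin (ξ : Param) : ℝ := min (phiPlus ξ) (phiMinus ξ)

/-- The skew tent map with parameters (a, b). -/
def stm (a b x : ℝ) : ℝ := if x ≤ 0 then a*x + 1 else b*x + 1

/-- The set of points mapping into the right half-plane. -/
def PiSet (ξ : Param) : Set (ℝ × ℝ) := {p | 0 ≤ (fBC ξ p).1}

/-- The conjugating affine change of coordinates h_ξ. -/
def hMap (ξ : Param) (p : ℝ × ℝ) : ℝ × ℝ :=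
  (p.1 / (ξ.tR + ξ.dR + 1), (ξ.dR * p.1 + ξ.tR * p.2 - ξ.dR) / (ξ.tR + ξ.dR + 1))

def Rset1 (n : ℕ) : Set Param :=
  {ξ | Phi ξ ∧ 0 < ξ.dL ∧ 0 < ξ.dR ∧ 0 < phiPlus (gmap^[n] ξ) ∧ phiPlus (gmap^[n+1] ξ) ≤ 0}

def Rset2 (n : ℕ) : Set Param :=
  {ξ | Phi ξ ∧ ξ.dL < 0 ∧ ξ.dR < 0 ∧ 0 < phiPlus (gmap^[n] ξ) ∧
    phiPlus (gmap^[n+1] ξ) ≤ 0 ∧ alphaF ξ < 0}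

def Rset3 (n : ℕ) : Set Param :=
  {ξ | Phi ξ ∧ 0 < ξ.dL ∧ ξ.dR < 0 ∧ 0 < phiMin (gmap^[n] ξ) ∧
    phiMin (gmap^[n+1] ξ) ≤ 0 ∧ alphaF ξ < 0}

def Rset4 (n : ℕ) : Set Param :=
  {ξ | Phi ξ ∧ ξ.dL < 0 ∧ 0 < ξ.dR ∧ 0 < phiMin (gmap^[n] ξ) ∧
    phiMin (gmap^[n+1] ξ) ≤ 0 ∧ alphaF ξ < 0 ∧ alphaF (gmap ξ) < 0}

/-- Renormalisation operator for skew tent maps. -/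
def g0 (p : ℝ × ℝ) : ℝ × ℝ := (p.2^2, p.1*p.2)
def phi0 (p : ℝ × ℝ) : ℝ := p.1*p.2 + p.1 - p.2
def alpha0 (p : ℝ × ℝ) : ℝ := p.1*p.2 + 1

/-- The regions R_n of skew tent map parameter space. -/
def RsetST (n : ℕ) : Set (ℝ × ℝ) :=
  {p | p.2 < -1 ∧ 0 < phi0 (g0^[n] p) ∧ phi0 (g0^[n+1] p) ≤ 0 ∧ alpha0 p < 0}


/-!
On `Π_ξ` the second iterate `f_ξ²` is conjugate, through the affine bijection `h_ξ`, to the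
renormalised map `f_{g(ξ)}`. Hence `S = h_ξ⁻¹(Λ)` is invariant under `f_ξ²`, and for any map `f`
with `f(f(S)) = S` the union `S ∪ f(S)` is `f`-invariant.
-/

theorem Set.image_union_image_eq_of_image_image_eq {α : Type*} {f : α → α} {S : Set α}
    (hS : f '' (f '' S) = S) : f '' (S ∪ f '' S) = S ∪ f '' S := by
  rw [Set.image_union, hS, Set.union_comm]

theorem Equiv.image_preimage_eq_of_semiconj {α β : Type*} (e : α ≃ β) {T : α → α} {F : β → β}
    {Λ : Set β} (hΛ : F '' Λ = Λ) (hconj : ∀ p ∈ e ⁻¹' Λ, e (T p) = F (e p)) :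
    T '' (e ⁻¹' Λ) = e ⁻¹' Λ := by
  have hcomm : Set.EqOn (T ∘ e.symm) (e.symm ∘ F) Λ := fun q hq => by
    simpa using congrArg e.symm (hconj (e.symm q) (by simpa using hq))
  rw [← e.image_symm_eq_preimage, ← Set.image_comp, hcomm.image_eq, Set.image_comp, hΛ]

lemma Phi.denom_neg {ξ : Param} (hξ : Phi ξ) : ξ.tR + ξ.dR + 1 < 0 := by
  linarith [hξ.2, le_abs_self (ξ.dR + 1)]

lemma Phi.tR_neg {ξ : Param} (hξ : Phi ξ) : ξ.tR < 0 := by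
  linarith [hξ.2, abs_nonneg (ξ.dR + 1)]

lemma fBC_of_nonneg (ξ : Param) {p : ℝ × ℝ} (hx : 0 ≤ p.1) :
    fBC ξ p = (ξ.tR * p.1 + p.2 + 1, -ξ.dR * p.1) := by
  unfold fBC
  split_ifs with h
  · rw [le_antisymm h hx]; ring_nf
  · rfl

lemma fBC_of_nonpos (ξ : Param) {p : ℝ × ℝ} (hx : p.1 ≤ 0) :
    fBC ξ p = (ξ.tL * p.1 + p.2 + 1, -ξ.dL * p.1) :=
  if_pos hx

lemma hMap_bijective {ξ : Param} (hd : ξ.tR + ξ.dR + 1 ≠ 0) (ht : ξ.tR ≠ 0) :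
    Function.Bijective (hMap ξ) := by
  refine ⟨fun p q h => ?_, fun q => ?_⟩
  · have h1 : p.1 = q.1 := by
      have := congrArg Prod.fst h
      simp only [hMap] at this
      field_simp at this
      exact this
    have h2 := congrArg Prod.snd h
    simp only [hMap, h1] at h2
    field_simp at h2
    exact Prod.ext h1 (mul_left_cancel₀ ht (by linarith))
  · refine ⟨((ξ.tR + ξ.dR + 1) * q.1,
      (q.2 * (ξ.tR + ξ.dR + 1) + ξ.dR - ξ.dR * ((ξ.tR + ξ.dR + 1) * q.1)) / ξ.tR), ?_⟩
    refine Prod.ext ?_ ?_ <;> simp only [hMap] <;> field_simp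
    ring

/-- Since `τ_R + δ_R + 1 < 0`, `h_ξ` swaps the half-planes, so the `LR` and `RL` branches of
`f_ξ²` land on the `R` and `L` branches of `f_{g(ξ)}`. -/
lemma hMap_fBC_fBC {ξ : Param} (hd : ξ.tR + ξ.dR + 1 < 0) {p : ℝ × ℝ} (hp : p ∈ PiSet ξ) :
    hMap ξ (fBC ξ (fBC ξ p)) = fBC (gmap ξ) (hMap ξ p) := by
  have hdne : ξ.tR + ξ.dR + 1 ≠ 0 := hd.ne
  replace hp : 0 ≤ (fBC ξ p).1 := hp
  rcases le_total p.1 0 with hx | hx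
  · have hq : 0 ≤ (hMap ξ p).1 := div_nonneg_of_nonpos hx hd.le
    rw [fBC_of_nonpos ξ hx] at hp
    rw [fBC_of_nonpos ξ hx, fBC_of_nonneg ξ hp, fBC_of_nonneg (gmap ξ) hq]
    refine Prod.ext ?_ ?_ <;> simp only [hMap, gmap] <;> field_simp <;> ring
  · have hq : (hMap ξ p).1 ≤ 0 := div_nonpos_of_nonneg_of_nonpos hx hd.le
    rw [fBC_of_nonneg ξ hx] at hp
    rw [fBC_of_nonneg ξ hx, fBC_of_nonneg ξ hp, fBC_of_nonpos (gmap ξ) hq]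
    refine Prod.ext ?_ ?_ <;> simp only [hMap, gmap] <;> field_simp <;> ring

theorem stmt_9 (ξ : Param) (hξ : Phi ξ) (Λ : Set (ℝ × ℝ))
    (hsub : Λ ⊆ hMap ξ '' PiSet ξ) (hinv : fBC (gmap ξ) '' Λ = Λ) :
    fBC ξ '' (hMap ξ ⁻¹' Λ ∪ fBC ξ '' (hMap ξ ⁻¹' Λ))
      = hMap ξ ⁻¹' Λ ∪ fBC ξ '' (hMap ξ ⁻¹' Λ) := by
  let e : ℝ × ℝ ≃ ℝ × ℝ :=
    Equiv.ofBijective (hMap ξ) (hMap_bijective hξ.denom_neg.ne hξ.tR_neg.ne)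
  have hS : e ⁻¹' Λ ⊆ PiSet ξ := fun p hp => by
    obtain ⟨q, hq, hqp⟩ := hsub hp
    rwa [← e.injective hqp]
  apply Set.image_union_image_eq_of_image_image_eq
  rw [Set.image_image]
  exact e.image_preimage_eq_of_semiconj hinv fun p hp => hMap_fBC_fBC hξ.denom_neg (hS hp)
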